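/- arXiv:2308.03338 — 4 statements merged into one kernel-verified Lean document; each statement's English description precedes it below -/
import Mathlib

section
/- Let X = X' ∪ Δ(σ) be a simplicial complex on V, where X' is a subcomplex and Δ(σ) is a simplex on σ ⊆ V. Then L(X) ≤ L(X') + 1. -/
open Finset

variable {V : Type*} [DecidableEq V] [Fintype V]

/-- An abstract simplicial complex: a finite collection of faces closed under subsets. -/
def IsComplex (X : Finset (Finset V)) : Prop :=
  ∀ s ∈ X, ∀ t, t ⊆ s → t ∈ X

/-- A collection of faces is a simplex if it is the full power set of some vertex set
(possibly empty). -/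
def IsSimplexC (Y : Finset (Finset V)) : Prop := ∃ τ : Finset V, Y = τ.powerset

/-- The induced subcomplex `X[W]`. -/
def indOn (X : Finset (Finset V)) (W : Finset V) : Finset (Finset V) :=
  X.filter (fun s => s ⊆ W)

/-- The `ℤ/2ℤ` boundary of a chain, a chain being recorded as the finite set of faces with
coefficient `1`.  The coefficient of `τ` in `∂ c` is the parity of the number of faces of `c`
covering `τ`.  (This includes the augmentation `∂₀`, with `∅` playing the role of the
generator of `C₋₁`, so homology is reduced homology.) -/
def bdry (c : Finset (Finset V)) : Finset (Finset V) :=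
  Finset.univ.filter (fun τ => Odd (c.filter (fun s => τ ⊆ s ∧ s.card = τ.card + 1)).card)

/-- Sum of chains over `ℤ/2ℤ` (symmetric difference). -/
def chAdd (c d : Finset (Finset V)) : Finset (Finset V) := (c \ d) ∪ (d \ c)

/-- An `n`-dimensional chain of `X` (each face has `n+1` vertices). -/
def IsNChain (X : Finset (Finset V)) (n : ℕ) (c : Finset (Finset V)) : Prop :=
  c ⊆ X ∧ ∀ s ∈ c, s.card = n + 1

/-- An `n`-cycle of `X` (reduced: `0`-cycles have evenly many vertices). -/
def IsNCycle (X : Finset (Finset V)) (n : ℕ) (c : Finset (Finset V)) : Prop :=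
  IsNChain X n c ∧ bdry c = ∅

/-- An `n`-boundary of `X`. -/
def IsNBdry (X : Finset (Finset V)) (n : ℕ) (c : Finset (Finset V)) : Prop :=
  ∃ d, IsNChain X (n + 1) d ∧ bdry d = c

/-- `X` is `d`-Leray: all reduced homology of induced subcomplexes vanishes in
dimensions `≥ d`. -/
def IsLeray (X : Finset (Finset V)) (d : ℕ) : Prop :=
  ∀ W : Finset V, ∀ i : ℕ, d ≤ i → ∀ c,
    IsNCycle (indOn X W) i c → IsNBdry (indOn X W) i c

/-- The Leray number `L(X)`. -/
noncomputable def lerayNum (X : Finset (Finset V)) : ℕ := sInf {d | IsLeray X d}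

/-- The facets (maximal faces) of `X`. -/
def facetsOf (X : Finset (Finset V)) : Finset (Finset V) :=
  X.filter (fun s => ∀ t ∈ X, s ⊆ t → s = t)

/-- `σ 0, …, σ (m-1)` is an enumeration (linear ordering) of the facets of `X`. -/
def IsFacetEnum (X : Finset (Finset V)) (m : ℕ) (σ : ℕ → Finset V) : Prop :=
  (∀ i, i < m → σ i ∈ facetsOf X) ∧ (∀ s ∈ facetsOf X, ∃ i, i < m ∧ σ i = s) ∧
    (∀ i j, i < m → j < m → σ i = σ j → i = j)

/-- `X_j = ⋃_{i < j} Δ(σ i)`. -/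
def cUnion (σ : ℕ → Finset V) (j : ℕ) : Finset (Finset V) :=
  (Finset.range j).biUnion (fun i => (σ i).powerset)

-- `Mval σ j = M_≺(X_{j+1})`: starts at `1`, increases by `1` exactly when the newly
-- attached simplex meets the union of the previous ones in a non-simplex.
open Classical in
noncomputable def Mval (σ : ℕ → Finset V) : ℕ → ℕ
  | 0 => 1
  | (j+1) => Mval σ j + (if IsSimplexC (cUnion σ (j+1) ∩ (σ (j+1)).powerset) then 0 else 1)

/-- `M(X)`: the minimum of `M_≺(X)` over all facet orderings. -/
noncomputable def Mnum (X : Finset (Finset V)) : ℕ :=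
  sInf {k | ∃ m σ, 0 < m ∧ IsFacetEnum X m σ ∧ k = Mval σ (m - 1)}

/-- The facet ordering `σ 0 ≺ ⋯ ≺ σ (m-1)` is a weak shelling. -/
def IsWeakShelling (σ : ℕ → Finset V) (m : ℕ) : Prop :=
  ∀ j, 1 ≤ j → j < m → ∃ u ∈ σ j, IsSimplexC (indOn (cUnion σ j) ((σ j).erase u))

/-- `c` is the edge set of a cycle (graph cycle, length `≥ 3`). -/
def IsCycleEdges (c : Finset (Finset V)) : Prop :=
  ∃ n : ℕ, 3 ≤ n ∧ ∃ f : ℕ → V, (∀ i j, i < n → j < n → f i = f j → i = j) ∧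
    c = (Finset.range n).image (fun i => ({f i, f ((i + 1) % n)} : Finset V))


section Aux
open scoped symmDiff

lemma chAdd_eq_symmDiff (c d : Finset (Finset V)) : chAdd c d = c ∆ d := by
  ext s
  simp [chAdd, Finset.mem_symmDiff, Finset.mem_union, Finset.mem_sdiff]

lemma mem_bdry {c : Finset (Finset V)} {τ : Finset V} :
    τ ∈ bdry c ↔ Odd (c.filter (fun s => τ ⊆ s ∧ s.card = τ.card + 1)).card := by
  simp [bdry]

lemma mem_bdry_exists {c : Finset (Finset V)} {τ : Finset V} (h : τ ∈ bdry c) :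
    ∃ s ∈ c, τ ⊆ s ∧ s.card = τ.card + 1 := by
  rw [mem_bdry] at h
  have hpos : 0 < (c.filter (fun s => τ ⊆ s ∧ s.card = τ.card + 1)).card := by
    rcases h with ⟨k, hk⟩; omega
  obtain ⟨s, hs⟩ := Finset.card_pos.mp hpos
  rw [Finset.mem_filter] at hs
  exact ⟨s, hs.1, hs.2⟩

lemma bdry_empty : bdry (∅ : Finset (Finset V)) = ∅ := by
  ext τ
  simp [bdry, Nat.odd_iff]

lemma odd_card_symmDiff (a b : Finset (Finset V)) :
    Odd (a ∆ b).card ↔ ¬ (Odd a.card ↔ Odd b.card) := by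
  have h1 : (a ∆ b).card = (a \ b).card + (b \ a).card := by
    rw [symmDiff_def, Finset.sup_eq_union]
    exact Finset.card_union_of_disjoint (disjoint_sdiff_sdiff)
  have h2 := Finset.card_sdiff_add_card_inter a b
  have h3 := Finset.card_sdiff_add_card_inter b a
  have h4 : (a ∩ b).card = (b ∩ a).card := by rw [Finset.inter_comm]
  simp only [Nat.odd_iff] at *
  omega

lemma filter_symmDiff' (p : Finset V → Prop) [DecidablePred p] (a b : Finset (Finset V)) :
    (a ∆ b).filter p = a.filter p ∆ b.filter p := by
  ext s
  simp only [Finset.mem_symmDiff, Finset.mem_filter]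
  tauto

lemma bdry_symmDiff (c d : Finset (Finset V)) : bdry (c ∆ d) = bdry c ∆ bdry d := by
  ext τ
  rw [Finset.mem_symmDiff]
  simp only [mem_bdry, filter_symmDiff', odd_card_symmDiff]
  tauto

lemma even_interval_card (ρ s : Finset V) :
    Even ((Finset.univ.filter (fun τ : Finset V =>
      (ρ ⊆ τ ∧ τ.card = ρ.card + 1) ∧ τ ⊆ s ∧ s.card = τ.card + 1)).card) := by
  by_cases h : ρ ⊆ s ∧ s.card = ρ.card + 2
  · have heq : (Finset.univ.filter (fun τ : Finset V =>
        (ρ ⊆ τ ∧ τ.card = ρ.card + 1) ∧ τ ⊆ s ∧ s.card = τ.card + 1))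
        = (s \ ρ).image (fun x => insert x ρ) := by
      ext τ
      simp only [Finset.mem_filter, Finset.mem_univ, true_and, Finset.mem_image,
        Finset.mem_sdiff]
      constructor
      · rintro ⟨⟨h1, h2⟩, h3, _⟩
        have hcard : (τ \ ρ).card = 1 := by
          rw [Finset.card_sdiff_of_subset h1]; omega
        obtain ⟨x, hx⟩ := Finset.card_eq_one.mp hcard
        have hxτ : x ∈ τ \ ρ := by rw [hx]; exact Finset.mem_singleton_self x
        rw [Finset.mem_sdiff] at hxτ
        refine ⟨x, ⟨h3 hxτ.1, hxτ.2⟩, ?_⟩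
        have : τ \ ρ ∪ ρ = τ := Finset.sdiff_union_of_subset h1
        rw [← this, hx]
        ext y; simp [or_comm]
      · rintro ⟨x, ⟨hxs, hxρ⟩, rfl⟩
        have hcard : (insert x ρ).card = ρ.card + 1 := Finset.card_insert_of_notMem hxρ
        exact ⟨⟨Finset.subset_insert x ρ, hcard⟩,
          Finset.insert_subset hxs h.1, by omega⟩
    rw [heq, Finset.card_image_of_injOn, Finset.card_sdiff_of_subset h.1]
    · rw [h.2]; simp
    · intro x hx y hy hxy
      rw [Finset.mem_coe, Finset.mem_sdiff] at hx hy
      have hxy' : insert x ρ = insert y ρ := hxy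
      have : x ∈ insert y ρ := hxy' ▸ Finset.mem_insert_self x ρ
      rcases Finset.mem_insert.mp this with h' | h'
      · exact h'
      · exact absurd h' hx.2
  · have heq : (Finset.univ.filter (fun τ : Finset V =>
        (ρ ⊆ τ ∧ τ.card = ρ.card + 1) ∧ τ ⊆ s ∧ s.card = τ.card + 1)) = ∅ := by
      rw [Finset.filter_eq_empty_iff]
      rintro τ _ ⟨⟨h1, h2⟩, h3, h4⟩
      exact h ⟨h1.trans h3, by omega⟩
    rw [heq]
    simp

lemma bdry_bdry (c : Finset (Finset V)) : bdry (bdry c) = ∅ := by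
  ext ρ
  simp only [mem_bdry, Finset.notMem_empty, iff_false, Nat.odd_iff]
  have hfil : (bdry c).filter (fun τ => ρ ⊆ τ ∧ τ.card = ρ.card + 1)
      = (Finset.univ.filter (fun τ : Finset V => ρ ⊆ τ ∧ τ.card = ρ.card + 1)).filter
        (fun τ => Odd (c.filter (fun s => τ ⊆ s ∧ s.card = τ.card + 1)).card) := by
    rw [bdry, Finset.filter_filter, Finset.filter_filter]
    exact Finset.filter_congr (fun τ _ => by tauto)
  rw [hfil]
  set T := Finset.univ.filter (fun τ : Finset V => ρ ⊆ τ ∧ τ.card = ρ.card + 1) with hT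
  rw [Finset.card_filter]
  rw [Finset.sum_nat_mod]
  have hpt : ∀ τ ∈ T, ((if Odd (c.filter (fun s => τ ⊆ s ∧ s.card = τ.card + 1)).card
      then 1 else 0) % 2) = (c.filter (fun s => τ ⊆ s ∧ s.card = τ.card + 1)).card % 2 := by
    intro τ _
    by_cases h : Odd (c.filter (fun s => τ ⊆ s ∧ s.card = τ.card + 1)).card
    · rw [if_pos h]; rw [Nat.odd_iff] at h; omega
    · rw [if_neg h]; rw [Nat.odd_iff] at h; omega
  rw [Finset.sum_congr rfl hpt, ← Finset.sum_nat_mod]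
  have hswap : (∑ τ ∈ T, (c.filter (fun s => τ ⊆ s ∧ s.card = τ.card + 1)).card)
      = ∑ s ∈ c, (T.filter (fun τ => τ ⊆ s ∧ s.card = τ.card + 1)).card := by
    simp only [Finset.card_filter]
    exact Finset.sum_comm
  rw [hswap]
  have heven : ∀ s ∈ c, (T.filter (fun τ => τ ⊆ s ∧ s.card = τ.card + 1)).card % 2 = 0 := by
    intro s _
    have := even_interval_card ρ s
    rw [Nat.even_iff] at this
    rw [hT, Finset.filter_filter]
    exact this
  rw [Finset.sum_nat_mod, Finset.sum_congr rfl heven]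
  simp

lemma simplex_isNBdry (τ : Finset V) (i : ℕ) (c : Finset (Finset V))
    (hsub : c ⊆ τ.powerset) (hcard : ∀ s ∈ c, s.card = i + 1) (hcyc : bdry c = ∅) :
    ∃ g, g ⊆ τ.powerset ∧ (∀ s ∈ g, s.card = i + 2) ∧ bdry g = c := by
  rcases c.eq_empty_or_nonempty with rfl | ⟨s₀, hs₀⟩
  · exact ⟨∅, Finset.empty_subset _, fun s hs => absurd hs (Finset.notMem_empty s),
      bdry_empty⟩
  have hs₀τ : s₀ ⊆ τ := Finset.mem_powerset.mp (hsub hs₀)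
  have hs₀c : s₀.card = i + 1 := hcard _ hs₀
  have hne : s₀.Nonempty := Finset.card_pos.mp (by omega)
  obtain ⟨v, hv⟩ := hne
  have hvτ : v ∈ τ := hs₀τ hv
  set c' := c.filter (fun s => v ∉ s) with hc'
  refine ⟨c'.image (insert v), ?_, ?_, ?_⟩
  · intro s hs
    obtain ⟨t, ht, rfl⟩ := Finset.mem_image.mp hs
    rw [Finset.mem_filter] at ht
    exact Finset.mem_powerset.mpr
      (Finset.insert_subset hvτ (Finset.mem_powerset.mp (hsub ht.1)))
  · intro s hs
    obtain ⟨t, ht, rfl⟩ := Finset.mem_image.mp hs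
    rw [Finset.mem_filter] at ht
    rw [Finset.card_insert_of_notMem ht.2, hcard _ ht.1]
  · ext ρ
    rw [mem_bdry]
    have hinj : Set.InjOn (insert v) (↑c' : Set (Finset V)) := by
      intro x hx y hy hxy
      rw [Finset.mem_coe, hc', Finset.mem_filter] at hx hy
      rw [← Finset.erase_insert hx.2, ← Finset.erase_insert hy.2, hxy]
    rw [Finset.filter_image, Finset.card_image_of_injOn (hinj.mono (Finset.filter_subset _ _))]
    by_cases hvρ : v ∈ ρ
    · -- count = #{s ∈ c : v ∉ s, erase v ρ ⊆ s, card s = (erase v ρ).card + 1}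
      have hρc : ρ.card = (ρ.erase v).card + 1 := by
        rw [Finset.card_erase_of_mem hvρ]
        have : 0 < ρ.card := Finset.card_pos.mpr ⟨v, hvρ⟩
        omega
      have hcond : ∀ s ∈ c', (ρ ⊆ insert v s ∧ (insert v s).card = ρ.card + 1)
          ↔ (ρ.erase v ⊆ s ∧ s.card = (ρ.erase v).card + 1) := by
        intro s hs
        rw [hc', Finset.mem_filter] at hs
        rw [Finset.card_insert_of_notMem hs.2]
        constructor
        · rintro ⟨h1, h2⟩
          refine ⟨?_, by omega⟩
          intro x hx
          rw [Finset.mem_erase] at hx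
          rcases Finset.mem_insert.mp (h1 hx.2) with h' | h'
          · exact absurd h' hx.1
          · exact h'
        · rintro ⟨h1, h2⟩
          refine ⟨?_, by omega⟩
          intro x hx
          rcases eq_or_ne x v with rfl | hxv
          · exact Finset.mem_insert_self _ _
          · exact Finset.mem_insert_of_mem (h1 (Finset.mem_erase.mpr ⟨hxv, hx⟩))
      rw [Finset.filter_congr hcond]
      -- use cycle condition at erase v ρ
      have hz : (ρ.erase v) ∉ bdry c := by rw [hcyc]; exact Finset.notMem_empty _
      rw [mem_bdry, Nat.odd_iff] at hz
      push_neg at hz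
      have hsplit := Finset.card_filter_add_card_filter_not
        (s := c.filter (fun s => ρ.erase v ⊆ s ∧ s.card = (ρ.erase v).card + 1))
        (p := fun s => v ∉ s)
      have h1 : (c.filter (fun s => ρ.erase v ⊆ s ∧ s.card = (ρ.erase v).card + 1)).filter
          (fun s => v ∉ s) = c'.filter (fun s => ρ.erase v ⊆ s ∧ s.card = (ρ.erase v).card + 1) := by
        rw [hc', Finset.filter_filter, Finset.filter_filter]
        exact Finset.filter_congr (fun s _ => by tauto)
      have h2 : (c.filter (fun s => ρ.erase v ⊆ s ∧ s.card = (ρ.erase v).card + 1)).filter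
          (fun s => ¬ v ∉ s) = if ρ ∈ c then {ρ} else ∅ := by
        ext s
        rw [Finset.mem_filter, Finset.mem_filter]
        constructor
        · rintro ⟨⟨hsc, hρs, hsc'⟩, hvs⟩
          push_neg at hvs
          have hρsub : ρ ⊆ s := by
            intro x hx
            rcases eq_or_ne x v with rfl | hxv
            · exact hvs
            · exact hρs (Finset.mem_erase.mpr ⟨hxv, hx⟩)
          have : s = ρ := (Finset.eq_of_subset_of_card_le hρsub (by omega)).symm
          subst this
          rw [if_pos hsc]
          exact Finset.mem_singleton_self _
        · intro hs
          by_cases hρ : ρ ∈ c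
          · rw [if_pos hρ, Finset.mem_singleton] at hs
            subst hs
            exact ⟨⟨hρ, Finset.erase_subset _ _, by omega⟩, by simp [hvρ]⟩
          · rw [if_neg hρ] at hs
            exact absurd hs (Finset.notMem_empty s)
      rw [h1, h2] at hsplit
      by_cases hρ : ρ ∈ c
      · rw [if_pos hρ] at hsplit
        simp only [Finset.card_singleton] at hsplit
        simp only [hρ, iff_true]
        rw [Nat.odd_iff]
        omega
      · rw [if_neg hρ] at hsplit
        simp only [Finset.card_empty] at hsplit
        simp only [hρ, iff_false]
        rw [Nat.odd_iff]
        omega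
    · -- v ∉ ρ : filter is {ρ} ∩ c'
      have heq : c'.filter (fun s => ρ ⊆ insert v s ∧ (insert v s).card = ρ.card + 1)
          = if ρ ∈ c then {ρ} else ∅ := by
        ext s
        rw [Finset.mem_filter]
        constructor
        · rintro ⟨hs, h1, h2⟩
          rw [hc', Finset.mem_filter] at hs
          have hρs : ρ ⊆ s := by
            intro x hx
            rcases Finset.mem_insert.mp (h1 hx) with h' | h'
            · exact absurd (h' ▸ hx) hvρ
            · exact h'
          rw [Finset.card_insert_of_notMem hs.2] at h2
          have : s = ρ := (Finset.eq_of_subset_of_card_le hρs (by omega)).symm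
          subst this
          rw [if_pos hs.1]
          exact Finset.mem_singleton_self _
        · intro hs
          by_cases hρ : ρ ∈ c
          · rw [if_pos hρ, Finset.mem_singleton] at hs
            subst hs
            refine ⟨Finset.mem_filter.mpr ⟨hρ, hvρ⟩, Finset.subset_insert _ _, ?_⟩
            rw [Finset.card_insert_of_notMem hvρ]
          · rw [if_neg hρ] at hs
            exact absurd hs (Finset.notMem_empty s)
      rw [heq]
      by_cases hρ : ρ ∈ c
      · simp [hρ]
      · simp [hρ, Nat.odd_iff]

lemma isLeray_card (X : Finset (Finset V)) : IsLeray X (Fintype.card V) := by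
  intro W i hi c hc
  have hce : c = ∅ := by
    rcases c.eq_empty_or_nonempty with h | ⟨s, hs⟩
    · exact h
    · have h1 := hc.1.2 s hs
      have h2 : s.card ≤ Fintype.card V := Finset.card_le_univ s
      omega
  subst hce
  exact ⟨∅, ⟨Finset.empty_subset _, fun s hs => absurd hs (Finset.notMem_empty s)⟩, bdry_empty⟩

lemma isLeray_lerayNum (X : Finset (Finset V)) : IsLeray X (lerayNum X) :=
  Nat.sInf_mem (⟨Fintype.card V, by exact isLeray_card X⟩ : Set.Nonempty {d | IsLeray X d})

end Aux
open scoped symmDiff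

/-- attaching a simplex increases the Leray number by at most one. -/
theorem attach_simplex_leray_le (X' : Finset (Finset V)) (σ : Finset V)
    (hX' : IsComplex X') :
    lerayNum (X' ∪ σ.powerset) ≤ lerayNum X' + 1 := by
  apply Nat.sInf_le
  show IsLeray (X' ∪ σ.powerset) (lerayNum X' + 1)
  set X := X' ∪ σ.powerset with hX
  set d := lerayNum X' with hd
  have hL : IsLeray X' d := isLeray_lerayNum X'
  intro W i hi c hc
  obtain ⟨j, rfl⟩ : ∃ j, i = j + 1 := ⟨i - 1, by omega⟩
  have hj : d ≤ j := by omega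
  obtain ⟨⟨hcsub, hccard⟩, hccyc⟩ := hc
  set c₁ := c.filter (fun s => s ⊆ σ) with hc₁
  set c₂ := c.filter (fun s => ¬ s ⊆ σ) with hc₂
  have hc12 : c₁ ∆ c₂ = c := by
    ext s
    simp only [hc₁, hc₂, Finset.mem_symmDiff, Finset.mem_filter]
    tauto
  have hc₂X' : c₂ ⊆ indOn X' W := by
    intro s hs
    rw [hc₂, Finset.mem_filter] at hs
    have := hcsub hs.1
    rw [indOn, Finset.mem_filter] at this ⊢
    rcases Finset.mem_union.mp this.1 with h | h
    · exact ⟨h, this.2⟩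
    · exact absurd (Finset.mem_powerset.mp h) hs.2
  have hbeq : bdry c₁ = bdry c₂ := by
    have h : bdry c₁ ∆ bdry c₂ = ∅ := by
      rw [← bdry_symmDiff, hc12, hccyc]
    rwa [← Finset.bot_eq_empty, symmDiff_eq_bot] at h
  have hzchain : IsNChain (indOn X' (σ ∩ W)) j (bdry c₂) ∧ ∀ t ∈ bdry c₂, t.card = j + 1 := by
    constructor
    · constructor
      · intro t ht
        obtain ⟨s₂, hs₂, hts₂, _⟩ := mem_bdry_exists ht
        obtain ⟨s₁, hs₁, hts₁, _⟩ := mem_bdry_exists (hbeq ▸ ht)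
        have hs₂' := hc₂X' hs₂
        rw [indOn, Finset.mem_filter] at hs₂'
        rw [hc₁, Finset.mem_filter] at hs₁
        have hs₁W : s₁ ⊆ W := by
          have := hcsub hs₁.1
          rw [indOn, Finset.mem_filter] at this
          exact this.2
        rw [indOn, Finset.mem_filter]
        exact ⟨hX' _ hs₂'.1 _ hts₂, Finset.subset_inter (hts₁.trans hs₁.2) (hts₁.trans hs₁W)⟩
      · intro t ht
        obtain ⟨s₂, hs₂, _, hcd⟩ := mem_bdry_exists ht
        have : s₂.card = j + 1 + 1 := hccard _ (Finset.mem_of_mem_filter _ hs₂)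
        omega
    · intro t ht
      obtain ⟨s₂, hs₂, _, hcd⟩ := mem_bdry_exists ht
      have : s₂.card = j + 1 + 1 := hccard _ (Finset.mem_of_mem_filter _ hs₂)
      omega
  have hzcyc : bdry (bdry c₂) = ∅ := bdry_bdry c₂
  obtain ⟨e, heChain, hebdry⟩ := hL (σ ∩ W) j hj (bdry c₂) ⟨hzchain.1, hzcyc⟩
  have heSub : ∀ s ∈ e, s ⊆ σ ∩ W ∧ s ∈ X' := by
    intro s hs
    have := heChain.1 hs
    rw [indOn, Finset.mem_filter] at this
    exact ⟨this.2, this.1⟩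
  -- y := c₂ ∆ e is a cycle of indOn X' W
  have hyChain : IsNChain (indOn X' W) (j + 1) (c₂ ∆ e) := by
    constructor
    · intro s hs
      rcases Finset.mem_symmDiff.mp hs with ⟨h1, _⟩ | ⟨h1, _⟩
      · exact hc₂X' h1
      · obtain ⟨h2, h3⟩ := heSub _ h1
        rw [indOn, Finset.mem_filter]
        exact ⟨h3, h2.trans (Finset.inter_subset_right)⟩
    · intro s hs
      rcases Finset.mem_symmDiff.mp hs with ⟨h1, _⟩ | ⟨h1, _⟩
      · exact hccard _ (Finset.mem_of_mem_filter _ h1)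
      · exact heChain.2 _ h1
  have hyCyc : bdry (c₂ ∆ e) = ∅ := by
    rw [bdry_symmDiff, hebdry, symmDiff_self, Finset.bot_eq_empty]
  obtain ⟨f, hfChain, hfbdry⟩ := hL W (j + 1) (by omega) (c₂ ∆ e) ⟨hyChain, hyCyc⟩
  -- w := c₁ ∆ e is a cycle of the simplex (σ ∩ W).powerset
  have hwSub : (c₁ ∆ e) ⊆ (σ ∩ W).powerset := by
    intro s hs
    rw [Finset.mem_powerset]
    rcases Finset.mem_symmDiff.mp hs with ⟨h1, _⟩ | ⟨h1, _⟩
    · rw [hc₁, Finset.mem_filter] at h1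
      have hsW : s ⊆ W := by
        have := hcsub h1.1
        rw [indOn, Finset.mem_filter] at this
        exact this.2
      exact Finset.subset_inter h1.2 hsW
    · exact (heSub _ h1).1
  have hwCard : ∀ s ∈ c₁ ∆ e, s.card = j + 1 + 1 := by
    intro s hs
    rcases Finset.mem_symmDiff.mp hs with ⟨h1, _⟩ | ⟨h1, _⟩
    · exact hccard _ (Finset.mem_of_mem_filter _ h1)
    · exact heChain.2 _ h1
  have hwCyc : bdry (c₁ ∆ e) = ∅ := by
    rw [bdry_symmDiff, hebdry, hbeq, symmDiff_self, Finset.bot_eq_empty]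
  obtain ⟨g, hgSub, hgCard, hgbdry⟩ := simplex_isNBdry (σ ∩ W) (j + 1) (c₁ ∆ e) hwSub hwCard hwCyc
  refine ⟨f ∆ g, ⟨?_, ?_⟩, ?_⟩
  · intro s hs
    rcases Finset.mem_symmDiff.mp hs with ⟨h1, _⟩ | ⟨h1, _⟩
    · have := hfChain.1 h1
      rw [indOn, Finset.mem_filter] at this ⊢
      exact ⟨Finset.mem_union_left _ this.1, this.2⟩
    · have := Finset.mem_powerset.mp (hgSub h1)
      rw [indOn, Finset.mem_filter]
      exact ⟨Finset.mem_union_right _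
        (Finset.mem_powerset.mpr (this.trans Finset.inter_subset_left)),
        this.trans Finset.inter_subset_right⟩
  · intro s hs
    rcases Finset.mem_symmDiff.mp hs with ⟨h1, _⟩ | ⟨h1, _⟩
    · exact hfChain.2 _ h1
    · exact hgCard _ h1
  · rw [bdry_symmDiff, hfbdry, hgbdry, ← hc12]
    ext s
    simp only [Finset.mem_symmDiff]
    tauto
end

section
/- For any simplicial complex X on vertex set V with facet ordering ≺: σ_1 ≺ ⋯ ≺ σ_m (m ≥ 1), one has M_≺(X) ≤ m − |V| + |σ_1| + Σ_{j=2}^{m} (dim σ_j − conn_≺ σ_j), where conn_≺ σ_j = max{|σ_i ∩ σ_j| : i < j} and dim σ_j = |σ_j| − 1. -/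
open Finset

variable {V : Type*} [DecidableEq V] [Fintype V]

/-! Each attachment step raises `M_≺` by at most one, and not at all when the vertices that
`σ j` shares with the earlier facets already lie in a single earlier facet `σ i`: then
`X_{j-1} ∩ Δ(σ j) = Δ(σ i ∩ σ j)`. When they do not, the shared vertex set is strictly larger
than `conn σ j`, so the step is paid for by the excess `|(σ 0 ∪ ⋯ ∪ σ (j-1)) ∩ σ j| - conn σ j`.
Summing, and counting `|V|` by inclusion–exclusion one facet at a time, gives the bound. -/

omit [Fintype V] in
lemma isSimplexC_cUnion_inter_powerset {σ : ℕ → Finset V} {i j : ℕ} (hi : i < j)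
    (h : (range j).biUnion σ ∩ σ j ⊆ σ i) :
    IsSimplexC (cUnion σ j ∩ (σ j).powerset) := by
  refine ⟨σ i ∩ σ j, ?_⟩
  ext τ
  simp only [cUnion, mem_inter, mem_biUnion, mem_powerset, mem_range]
  constructor
  · rintro ⟨⟨l, hl, hτl⟩, hτj⟩
    have hτU : τ ⊆ (range j).biUnion σ := hτl.trans (subset_biUnion_of_mem σ (mem_range.2 hl))
    exact subset_inter ((subset_inter hτU hτj).trans h) hτj
  · intro hτ
    exact ⟨⟨i, hi, hτ.trans inter_subset_left⟩, hτ.trans inter_subset_right⟩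

omit [Fintype V] in
lemma Mval_succ_add_sup_le (σ : ℕ → Finset V) (k : ℕ) :
    Mval σ (k + 1) + (range (k + 1)).sup (fun i => (σ i ∩ σ (k + 1)).card) ≤
      Mval σ k + ((range (k + 1)).biUnion σ ∩ σ (k + 1)).card := by
  obtain ⟨i, hi, hsup⟩ := exists_mem_eq_sup (range (k + 1)) nonempty_range_add_one
    (fun i => (σ i ∩ σ (k + 1)).card)
  have hsub : σ i ∩ σ (k + 1) ⊆ (range (k + 1)).biUnion σ ∩ σ (k + 1) :=
    inter_subset_inter (subset_biUnion_of_mem σ hi) subset_rfl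
  rw [hsup, Mval]
  rcases (card_le_card hsub).lt_or_eq with hlt | heq
  · split_ifs <;> omega
  · have hsimplex : IsSimplexC (cUnion σ (k + 1) ∩ (σ (k + 1)).powerset) :=
      isSimplexC_cUnion_inter_powerset (mem_range.1 hi)
        ((eq_of_subset_of_card_le hsub heq.ge).symm ▸ inter_subset_left)
    rw [if_pos hsimplex, heq]
    omega

omit [Fintype V] in
lemma card_biUnion_range_succ_add_card_inter (σ : ℕ → Finset V) (k : ℕ) :
    ((range (k + 1)).biUnion σ).card + ((range k).biUnion σ ∩ σ k).card =
      (σ k).card + ((range k).biUnion σ).card := by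
  rw [range_add_one, biUnion_insert, inter_comm]
  exact card_union_add_card_inter _ _

omit [Fintype V] in
lemma Mval_le_connectivity_bound_succ (σ : ℕ → Finset V) (k : ℕ) :
    (Mval σ k : ℤ) ≤ ((k + 1 : ℕ) : ℤ) - ((range (k + 1)).biUnion σ).card + (σ 0).card +
      ∑ j ∈ Ico 1 (k + 1), (((σ j).card : ℤ) - 1 -
        ((range j).sup (fun i => (σ i ∩ σ j).card) : ℕ)) := by
  induction k with
  | zero => simp [Mval]
  | succ k ih =>
    have hstep := Mval_succ_add_sup_le σ k
    have hcard := card_biUnion_range_succ_add_card_inter σ (k + 1)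
    rw [sum_Ico_succ_top (by omega : 1 ≤ k + 1)]
    push_cast at ih hstep hcard ⊢
    linarith

theorem Mval_le_connectivity_bound_general (m : ℕ) (σ : ℕ → Finset V)
    (hm : 1 ≤ m) :
    (Mval σ (m - 1) : ℤ) ≤
      (m : ℤ) - ((Finset.range m).biUnion σ).card + (σ 0).card +
        ∑ j ∈ Finset.Ico 1 m, (((σ j).card : ℤ) - 1 -
          ((Finset.range j).sup (fun i => (σ i ∩ σ j).card) : ℕ)) := by
  obtain ⟨k, rfl⟩ : ∃ k, m = k + 1 := ⟨m - 1, by omega⟩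
  simpa using Mval_le_connectivity_bound_succ σ k

/-- `M_≺(X) ≤ m − |V| + |σ₁| + Σ_{j=2}^m (dim σ_j − conn_≺ σ_j)`. -/
theorem Mval_le_connectivity_bound (X : Finset (Finset V)) (m : ℕ) (σ : ℕ → Finset V)
    (hX : IsComplex X) (hm : 1 ≤ m) (henum : IsFacetEnum X m σ) :
    (Mval σ (m - 1) : ℤ) ≤
      (m : ℤ) - ((Finset.range m).biUnion σ).card + (σ 0).card +
        ∑ j ∈ Finset.Ico 1 m, (((σ j).card : ℤ) - 1 -
          ((Finset.range j).sup (fun i => (σ i ∩ σ j).card) : ℕ)) :=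
  Mval_le_connectivity_bound_general m σ hm
end

section
/- Let X be a simplicial complex with facets σ_1, …, σ_m, and let G be the complete weighted graph on [m] with vertex weights w(i) = |σ_i| and edge weights w({i,j}) = |σ_i ∩ σ_j|. For any facet ordering ≺, there exists a spanning tree F of G such that N_≺(X) = χ_w(F) − |V(X)| + 1, where N_≺(X) = m − |V(X)| + |σ_1| + Σ_{j=2}^m (dim σ_j − conn_≺ σ_j) and χ_w(F) = Σ_{v ∈ V(F)} w(v) − Σ_{e ∈ E(F)} w(e). -/
/-! Attach every facet `σ j`, `j > 0`, to an earlier facet `σ i` maximising `|σ i ∩ σ j|`. Since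
parents precede their children, this parent map is a tree on the `m` facets with `m - 1` edges,
and the edge attached to `σ j` has weight exactly `conn_≺ σ j`; so `χ_w(F)` is
`Σ |σ j| - Σ_{j ≥ 1} conn_≺ σ j`, which rearranges to `N_≺(X) + |V(X)| - 1`. -/

open Finset

variable {V : Type*} [DecidableEq V] [Fintype V]

open SimpleGraph

section ParentGraph

variable {α : Type*} [LinearOrder α] {p : α → α}

def parentGraph (p : α → α) : SimpleGraph α :=
  SimpleGraph.fromRel fun a b => p b = a ∧ a < b

theorem parentGraph_adj {a b : α} :
    (parentGraph p).Adj a b ↔ (p b = a ∧ a < b) ∨ (p a = b ∧ b < a) := by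
  rw [parentGraph, fromRel_adj, and_iff_right_iff_imp]
  rintro (⟨-, h⟩ | ⟨-, h⟩)
  exacts [h.ne, h.ne']

theorem parentGraph_reachable [WellFoundedLT α] {r : α} (hp : ∀ a, p a < a ↔ a ≠ r) (a : α) :
    (parentGraph p).Reachable r a := by
  induction a using WellFoundedLT.induction with
  | _ a ih =>
    by_cases har : a = r
    · rw [har]
    · have hpa := (hp a).2 har
      exact (ih _ hpa).trans (parentGraph_adj.2 (Or.inl ⟨rfl, hpa⟩)).reachable

theorem parentGraph_connected [WellFoundedLT α] {r : α} (hp : ∀ a, p a < a ↔ a ≠ r) :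
    (parentGraph p).Connected :=
  have : Nonempty α := ⟨r⟩
  ⟨fun a b => (parentGraph_reachable hp a).symm.trans (parentGraph_reachable hp b)⟩

variable [Fintype α] [Fintype (parentGraph p).edgeSet]

theorem edgeFinset_parentGraph :
    (parentGraph p).edgeFinset = ({a | p a < a} : Finset α).image fun a => s(p a, a) := by
  ext e
  induction e using Sym2.ind with
  | _ x y =>
    simp only [mem_edgeFinset, mem_edgeSet, parentGraph_adj, mem_image, mem_filter, mem_univ,
      true_and, Sym2.eq_iff]
    constructor
    · rintro (⟨rfl, h⟩ | ⟨rfl, h⟩)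
      exacts [⟨y, h, Or.inl ⟨rfl, rfl⟩⟩, ⟨x, h, Or.inr ⟨rfl, rfl⟩⟩]
    · rintro ⟨a, h, ⟨rfl, rfl⟩ | ⟨rfl, rfl⟩⟩
      exacts [Or.inl ⟨rfl, h⟩, Or.inr ⟨rfl, h⟩]

theorem sum_edgeFinset_parentGraph {M : Type*} [AddCommMonoid M] (w : Sym2 α → M) :
    ∑ e ∈ (parentGraph p).edgeFinset, w e = ∑ a with p a < a, w s(p a, a) := by
  rw [edgeFinset_parentGraph, sum_image]
  intro a ha b hb hab
  simp only [coe_filter, mem_univ, true_and, Set.mem_ofPred_eq, Sym2.eq_iff] at ha hb hab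
  rcases hab with ⟨-, rfl⟩ | ⟨rfl, hab⟩
  · rfl
  · rw [← hab] at hb
    exact absurd (ha.trans hb) (lt_irrefl _)

theorem parentGraph_isTree {r : α} (hp : ∀ a, p a < a ↔ a ≠ r) : (parentGraph p).IsTree := by
  refine isTree_iff_connected_and_card.2 ⟨parentGraph_connected hp, ?_⟩
  have hcard : #(parentGraph p).edgeFinset = Fintype.card α - 1 := by
    rw [card_eq_sum_ones, sum_edgeFinset_parentGraph, ← card_eq_sum_ones]
    simp [hp, filter_ne']
  rw [← coe_edgeFinset, Nat.card_coe_set_eq, Set.ncard_coe_finset, hcard,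
    Nat.card_eq_fintype_card]
  have := Fintype.card_pos_iff.2 ⟨r⟩
  omega

end ParentGraph

section LeastArgmaxBelow

variable {α : Type*} [LinearOrder α] [OrderBot α] (f : ℕ → α) {j : ℕ}

noncomputable def leastArgmaxBelow (f : ℕ → α) (j : ℕ) : ℕ :=
  if h : j = 0 then 0 else Nat.find (exists_mem_eq_sup (range j) (nonempty_range_iff.2 h) f)

theorem leastArgmaxBelow_lt (hj : j ≠ 0) : leastArgmaxBelow f j < j := by
  rw [leastArgmaxBelow, dif_neg hj]
  exact mem_range.1 (Nat.find_spec (exists_mem_eq_sup (range j) (nonempty_range_iff.2 hj) f)).1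

theorem leastArgmaxBelow_le (j : ℕ) : leastArgmaxBelow f j ≤ j := by
  rcases eq_or_ne j 0 with rfl | hj
  · simp [leastArgmaxBelow]
  · exact (leastArgmaxBelow_lt f hj).le

theorem sup_range_eq_leastArgmaxBelow (hj : j ≠ 0) :
    (range j).sup f = f (leastArgmaxBelow f j) := by
  rw [leastArgmaxBelow, dif_neg hj]
  exact (Nat.find_spec (exists_mem_eq_sup (range j) (nonempty_range_iff.2 hj) f)).2

end LeastArgmaxBelow

theorem Fin.sum_univ_erase_zero {M : Type*} [AddCommMonoid M] {m : ℕ} (hm : 0 < m)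
    (f : ℕ → M) : ∑ a ∈ univ.erase (⟨0, hm⟩ : Fin m), f a = ∑ j ∈ Ico 1 m, f j := by
  have : (univ.erase (⟨0, hm⟩ : Fin m)).map Fin.valEmbedding = Ico 1 m := by
    ext j
    simp only [mem_map, mem_erase, mem_univ, and_true, Fin.valEmbedding_apply, mem_Ico]
    constructor
    · rintro ⟨a, ha, rfl⟩
      exact ⟨Nat.one_le_iff_ne_zero.2 fun h => ha (Fin.ext h), a.isLt⟩
    · rintro ⟨h1, h2⟩
      exact ⟨⟨j, h2⟩, fun h => by simp [Fin.ext_iff] at h; omega, rfl⟩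
  rw [← this, sum_map]
  rfl

section FacetParent

variable {β : Type*} [DecidableEq β] (σ : ℕ → Finset β) {m : ℕ}

/-- `parentGraph (facetParent σ)` is the tree `F` of the facet ordering. -/
noncomputable def facetParent (j : Fin m) : Fin m :=
  ⟨leastArgmaxBelow (fun i => #(σ i ∩ σ j)) j, (leastArgmaxBelow_le _ _).trans_lt j.isLt⟩

theorem facetParent_lt_iff (hm : 0 < m) (j : Fin m) :
    facetParent σ j < j ↔ j ≠ ⟨0, hm⟩ := by
  rw [Fin.lt_def, ne_eq, Fin.ext_iff]
  refine ⟨fun h h0 => ?_, leastArgmaxBelow_lt _⟩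
  have := leastArgmaxBelow_le (fun i => #(σ i ∩ σ j)) j
  simp only [facetParent] at h h0
  omega

theorem card_inter_facetParent {j : Fin m} (hj : (j : ℕ) ≠ 0) :
    #(σ (facetParent σ j) ∩ σ j) = (range j).sup fun i => #(σ i ∩ σ j) :=
  (sup_range_eq_leastArgmaxBelow (fun i => #(σ i ∩ σ j)) hj).symm

end FacetParent

theorem exists_spanning_tree_weighted_euler (m : ℕ)
    (hm : 1 ≤ m) (σ : ℕ → Finset V) :
    ∃ (T : SimpleGraph (Fin m)) (_ : DecidableRel T.Adj), T.IsTree ∧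
      ((m : ℤ) - ((Finset.range m).biUnion σ).card + (σ 0).card +
        ∑ j ∈ Finset.Ico 1 m, (((σ j).card : ℤ) - 1 -
          ((Finset.range j).sup (fun i => (σ i ∩ σ j).card) : ℕ))) =
      ((∑ i : Fin m, ((σ i.val).card : ℤ)) -
          ∑ e ∈ T.edgeFinset,
            Sym2.lift ⟨fun i j => (((σ i.val ∩ σ j.val).card : ℤ)),
              fun i j => by simp [Finset.inter_comm]⟩ e)
        - ((Finset.range m).biUnion σ).card + 1 := by
  classical
  have hp := facetParent_lt_iff σ hm
  refine ⟨parentGraph (facetParent σ), Classical.decRel _, parentGraph_isTree hp, ?_⟩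
  have hedges : ∑ e ∈ (parentGraph (facetParent σ)).edgeFinset,
      Sym2.lift ⟨fun i j : Fin m => (#(σ i ∩ σ j) : ℤ), fun i j => by simp only [inter_comm]⟩ e =
      ∑ j ∈ Ico 1 m, (((range j).sup fun i => #(σ i ∩ σ j) : ℕ) : ℤ) := by
    rw [sum_edgeFinset_parentGraph, filter_congr fun a _ => hp a, filter_ne',
      ← Fin.sum_univ_erase_zero hm]
    exact sum_congr rfl fun j hj =>
      congrArg Nat.cast (card_inter_facetParent σ fun h => (mem_erase.1 hj).1 (Fin.ext h))
  have hvertices : ∑ i : Fin m, (#(σ i) : ℤ) = #(σ 0) + ∑ j ∈ Ico 1 m, (#(σ j) : ℤ) := by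
    rw [← add_sum_erase _ _ (mem_univ ⟨0, hm⟩), Fin.sum_univ_erase_zero hm fun j => (#(σ j) : ℤ)]
  rw [hedges, hvertices, sum_sub_distrib, sum_sub_distrib, sum_const, Nat.card_Ico,
    nsmul_one, Nat.cast_sub hm]
  ring
end

section
/- Let X be a simplicial complex on V and W ⊆ V such that dim H̃_1(X[W]) ≥ 1. Among all 1-cycles α of X[W] whose class generates a nonzero element of H̃_1(X[W]), choose one with the minimum number s of edges. Then the s edges of α form a cycle graph, and this cycle is an induced cycle of the 1-skeleton of X[W] (it has no chord in X[W]). -/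
open Finset

variable {V : Type*} [DecidableEq V] [Fintype V]

/-!
Over `ℤ/2`, a `1`-cycle is an edge set in which every vertex has even degree, so a nonempty
one contains a graph cycle `C`. Both `C` and `α ∆ C` are `1`-cycles and their sum is `α`, so one
of them is nonbounding; by minimality `C = α`. A chord of `α` splits it into two strictly
shorter cycles whose sum is `α` again, which minimality rules out in the same way.
-/

open scoped symmDiff

lemma card_symmDiff_add_two_mul_card_inter {α : Type*} [DecidableEq α] (s t : Finset α) :
    #(s ∆ t) + 2 * #(s ∩ t) = #s + #t := by
  have hunion := card_union_add_card_inter s t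
  have hsdiff := card_sdiff_of_subset (inter_subset_union (s := s) (t := t))
  rw [symmDiff_eq_sup_sdiff_inf, sup_eq_union, inf_eq_inter, hsdiff]
  have := card_le_card (inter_subset_union (s := s) (t := t))
  omega

lemma filter_symmDiff {α : Type*} [DecidableEq α] (p : α → Prop) [DecidablePred p]
    (s t : Finset α) : (s ∆ t).filter p = s.filter p ∆ t.filter p := by
  ext x
  simp only [mem_filter, mem_symmDiff]
  tauto

lemma lt_card_of_injOn_Icc {β : Type*} [Fintype β] {f : ℕ → β} {k : ℕ}
    (hf : Set.InjOn f (Set.Icc 0 k)) : k < Fintype.card β := by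
  have := card_le_card_of_injOn f (s := Icc 0 k) (t := univ) (fun _ _ => mem_univ _)
    (by rwa [coe_Icc])
  simpa using this

lemma IsNChain.symmDiff {V : Type*} [DecidableEq V] {Y c d : Finset (Finset V)} {k : ℕ}
    (hc : IsNChain Y k c) (hd : IsNChain Y k d) : IsNChain Y k (c ∆ d) := by
  refine ⟨symmDiff_subset_union.trans (union_subset hc.1 hd.1), fun s hs => ?_⟩
  rcases mem_union.1 (symmDiff_subset_union hs) with h | h
  exacts [hc.2 s h, hd.2 s h]

lemma bdry_pair {x y : V} (hxy : x ≠ y) : bdry {{x, y}} = {{x}} ∆ {{y}} := by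
  ext τ
  have hxy' : ({x} : Finset V) ≠ {y} := by simpa using hxy
  simp only [bdry, mem_filter, mem_univ, true_and, filter_singleton, card_pair hxy, mem_symmDiff,
    mem_singleton]
  constructor
  · intro h
    split_ifs at h with hτ
    · obtain ⟨v, rfl⟩ := card_eq_one.1 (by omega : τ.card = 1)
      rcases (by simpa using hτ.1 : v = x ∨ v = y) with rfl | rfl
      exacts [Or.inl ⟨rfl, hxy'⟩, Or.inr ⟨rfl, hxy'.symm⟩]
    · simp at h
  · rintro (⟨rfl, -⟩ | ⟨rfl, -⟩) <;> simp

section Chains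

variable {Y : Finset (Finset V)} {k : ℕ} {c d : Finset (Finset V)}

lemma isNBdry_empty : IsNBdry Y k ∅ :=
  ⟨∅, ⟨empty_subset _, by simp⟩, by simp [bdry]⟩

lemma IsNCycle.symmDiff (hc : IsNCycle Y k c) (hd : IsNCycle Y k d) : IsNCycle Y k (c ∆ d) :=
  ⟨hc.1.symmDiff hd.1, by rw [bdry_symmDiff, hc.2, hd.2, symmDiff_self, bot_eq_empty]⟩

lemma IsNBdry.symmDiff (hc : IsNBdry Y k c) (hd : IsNBdry Y k d) : IsNBdry Y k (c ∆ d) := by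
  obtain ⟨c', hc', rfl⟩ := hc
  obtain ⟨d', hd', rfl⟩ := hd
  exact ⟨c' ∆ d', hc'.symmDiff hd', bdry_symmDiff c' d'⟩

lemma IsNCycle.even_card_filter_mem (hc : IsNCycle Y 1 c) (v : V) :
    Even (c.filter (v ∈ ·)).card := by
  have hv : {v} ∉ bdry c := by simp [hc.2]
  simp only [bdry, mem_filter, mem_univ, true_and, Nat.not_odd_iff_even] at hv
  convert hv using 3 with s hs
  simp [hc.1.2 s hs]

def IsMinNonBdry (Y : Finset (Finset V)) (k : ℕ) (α : Finset (Finset V)) : Prop :=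
  IsNCycle Y k α ∧ ¬ IsNBdry Y k α ∧
    ∀ α', IsNCycle Y k α' → ¬ IsNBdry Y k α' → α.card ≤ α'.card

variable {α : Finset (Finset V)}

/-- Since `α = c ∆ (α ∆ c)`, one of the two summands is nonbounding. -/
lemma IsMinNonBdry.card_le_or_card_le_symmDiff (hα : IsMinNonBdry Y k α) (hc : IsNCycle Y k c) :
    α.card ≤ c.card ∨ α.card ≤ (α ∆ c).card := by
  obtain ⟨hαc, hnb, hmin⟩ := hα
  by_contra! h
  have hcb : IsNBdry Y k c := by_contra fun hcb => (hmin c hc hcb).not_gt h.1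
  have hdb : IsNBdry Y k (α ∆ c) :=
    by_contra fun hdb => (hmin _ (hαc.symmDiff hc) hdb).not_gt h.2
  apply hnb
  simpa [symmDiff_comm α c] using hcb.symmDiff hdb

lemma IsMinNonBdry.eq_of_subset (hα : IsMinNonBdry Y k α) (hc : IsNCycle Y k c)
    (hne : c.Nonempty) (hsub : c ⊆ α) : c = α := by
  refine eq_of_subset_of_card_le hsub ((hα.card_le_or_card_le_symmDiff hc).resolve_right ?_)
  rw [symmDiff_of_ge hsub, card_sdiff_of_subset hsub, not_le]
  have := card_le_card hsub
  have := hne.card_pos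
  omega

end Chains

section Paths

variable {V : Type*} [DecidableEq V] {g : ℕ → V} {a b i j : ℕ}

def pathEdges (g : ℕ → V) (a b : ℕ) : Finset (Finset V) :=
  (Ico a b).image fun i => {g i, g (i + 1)}

def closedPathEdges (g : ℕ → V) (a b : ℕ) : Finset (Finset V) :=
  insert {g a, g b} (pathEdges g a b)

lemma pair_mem_pathEdges (ha : a ≤ i) (hb : i < b) : {g i, g (i + 1)} ∈ pathEdges g a b :=
  mem_image_of_mem _ (mem_Ico.2 ⟨ha, hb⟩)

lemma pathEdges_succ (hab : a ≤ b) :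
    pathEdges g a (b + 1) = insert {g b, g (b + 1)} (pathEdges g a b) := by
  rw [pathEdges, ← insert_Ico_right_eq_Ico_add_one hab, image_insert, pathEdges]

lemma pathEdges_mono (ha : a ≤ i) (hb : j ≤ b) : pathEdges g i j ⊆ pathEdges g a b :=
  image_subset_image (Ico_subset_Ico ha hb)

lemma pathEdges_congr {g' : ℕ → V} (h : Set.EqOn g g' (Set.Icc a b)) :
    pathEdges g a b = pathEdges g' a b := by
  refine image_congr fun i hi => ?_
  simp only [coe_Ico, Set.mem_Ico] at hi
  simp only [h ⟨hi.1, hi.2.le⟩, h ⟨by omega, hi.2⟩]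

lemma exists_eq_of_mem_of_mem_closedPathEdges {s : Finset V} {v : V} (hab : a ≤ b)
    (hs : s ∈ closedPathEdges g a b) (hv : v ∈ s) : ∃ i ∈ Set.Icc a b, g i = v := by
  rcases mem_insert.1 hs with rfl | hs
  · simp only [mem_insert, mem_singleton] at hv
    rcases hv with rfl | rfl
    exacts [⟨a, ⟨le_rfl, hab⟩, rfl⟩, ⟨b, ⟨hab, le_rfl⟩, rfl⟩]
  · obtain ⟨i, hi, rfl⟩ := mem_image.1 hs
    rw [mem_Ico] at hi
    simp only [mem_insert, mem_singleton] at hv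
    rcases hv with rfl | rfl
    exacts [⟨i, ⟨hi.1, hi.2.le⟩, rfl⟩, ⟨i + 1, ⟨by omega, hi.2⟩, rfl⟩]

lemma pair_succ_notMem_pathEdges (hg : Set.InjOn g (Set.Icc a (b + 1))) :
    {g b, g (b + 1)} ∉ pathEdges g a b := by
  intro h
  obtain ⟨i, hi, he⟩ := mem_image.1 h
  rw [mem_Ico] at hi
  have hmem : g (b + 1) ∈ ({g i, g (i + 1)} : Finset V) := by simp [he]
  simp only [mem_insert, mem_singleton] at hmem
  rcases hmem with h | h
  · have := hg ⟨by omega, le_rfl⟩ ⟨hi.1, by omega⟩ h; omega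
  · have := hg ⟨by omega, le_rfl⟩ ⟨by omega, by omega⟩ h; omega

lemma pair_notMem_pathEdges (hg : Set.InjOn g (Set.Icc a b)) (hab : a + 2 ≤ b) :
    {g a, g b} ∉ pathEdges g a b := by
  intro h
  obtain ⟨i, hi, he⟩ := mem_image.1 h
  rw [mem_Ico] at hi
  have ha : g a ∈ ({g i, g (i + 1)} : Finset V) := by simp [he]
  have hb : g b ∈ ({g i, g (i + 1)} : Finset V) := by simp [he]
  simp only [mem_insert, mem_singleton] at ha hb
  have hia : i = a := by
    rcases ha with h | h
    · exact (hg ⟨le_rfl, by omega⟩ ⟨hi.1, by omega⟩ h).symm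
    · have := hg ⟨le_rfl, by omega⟩ ⟨by omega, by omega⟩ h; omega
  rcases hb with h | h
  · have := hg ⟨by omega, le_rfl⟩ ⟨hi.1, by omega⟩ h; omega
  · have := hg ⟨by omega, le_rfl⟩ ⟨by omega, by omega⟩ h; omega

lemma card_pathEdges (hab : a ≤ b) (hg : Set.InjOn g (Set.Icc a b)) :
    #(pathEdges g a b) = b - a := by
  induction b, hab using Nat.le_induction with
  | base => simp [pathEdges]
  | succ b hab ih =>
    rw [pathEdges_succ hab, card_insert_of_notMem (pair_succ_notMem_pathEdges hg),
      ih (hg.mono (Set.Icc_subset_Icc_right (by omega)))]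
    omega

lemma card_closedPathEdges (hab : a + 2 ≤ b) (hg : Set.InjOn g (Set.Icc a b)) :
    #(closedPathEdges g a b) = b - a + 1 := by
  rw [closedPathEdges, card_insert_of_notMem (pair_notMem_pathEdges hg hab),
    card_pathEdges (by omega) hg]

lemma card_eq_two_of_mem_closedPathEdges {s : Finset V} (hab : a + 2 ≤ b)
    (hg : Set.InjOn g (Set.Icc a b)) (hs : s ∈ closedPathEdges g a b) : #s = 2 := by
  rcases mem_insert.1 hs with rfl | hs
  · exact card_pair fun h => by have := hg ⟨le_rfl, by omega⟩ ⟨by omega, le_rfl⟩ h; omega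
  · obtain ⟨i, hi, rfl⟩ := mem_image.1 hs
    rw [mem_Ico] at hi
    exact card_pair fun h => by have := hg ⟨hi.1, by omega⟩ ⟨by omega, by omega⟩ h; omega

lemma isCycleEdges_closedPathEdges (hab : a + 2 ≤ b) (hg : Set.InjOn g (Set.Icc a b)) :
    IsCycleEdges (closedPathEdges g a b) := by
  refine ⟨b - a + 1, by omega, fun j => g (a + j), fun i j hi hj h => ?_, ?_⟩
  · have := hg ⟨by omega, by omega⟩ ⟨by omega, by omega⟩ h
    omega
  ext s
  simp only [closedPathEdges, pathEdges, mem_insert, mem_image, mem_Ico, mem_range]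
  constructor
  · rintro (rfl | ⟨i, hi, rfl⟩)
    · refine ⟨b - a, by omega, ?_⟩
      rw [Nat.mod_self, Nat.add_zero, Nat.add_sub_cancel' (by omega), pair_comm]
    · refine ⟨i - a, by omega, ?_⟩
      rw [Nat.mod_eq_of_lt (by omega), Nat.add_sub_cancel' hi.1, ← add_assoc,
        Nat.add_sub_cancel' hi.1]
  · rintro ⟨i, hi, rfl⟩
    by_cases hlast : i = b - a
    · subst hlast
      left
      rw [Nat.mod_self, Nat.add_zero, Nat.add_sub_cancel' (by omega), pair_comm]
    · right
      refine ⟨a + i, by omega, ?_⟩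
      rw [Nat.mod_eq_of_lt (by omega), add_assoc]

end Paths

section Cycles

variable {g : ℕ → V} {a b : ℕ} {Y α : Finset (Finset V)}

lemma bdry_pathEdges (hab : a ≤ b) (hg : Set.InjOn g (Set.Icc a b)) :
    bdry (pathEdges g a b) = {{g a}} ∆ {{g b}} := by
  induction b, hab using Nat.le_induction with
  | base => simp [pathEdges, bdry]
  | succ b hab ih =>
    have hne : g b ≠ g (b + 1) := fun h => by
      have := hg ⟨hab, by omega⟩ ⟨by omega, le_rfl⟩ h; omega
    rw [pathEdges_succ hab, insert_eq, ← symmDiff_eq_union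
      (disjoint_singleton_left.2 (pair_succ_notMem_pathEdges hg)), bdry_symmDiff, bdry_pair hne,
      ih (hg.mono (Set.Icc_subset_Icc_right (by omega))), symmDiff_comm {{g a}},
      symmDiff_assoc, symmDiff_left_comm {{g b}}, symmDiff_symmDiff_cancel_left, symmDiff_comm]

lemma bdry_closedPathEdges (hab : a + 2 ≤ b) (hg : Set.InjOn g (Set.Icc a b)) :
    bdry (closedPathEdges g a b) = ∅ := by
  have hne : g a ≠ g b := fun h => by
    have := hg ⟨le_rfl, by omega⟩ ⟨by omega, le_rfl⟩ h; omega
  rw [closedPathEdges, insert_eq, ← symmDiff_eq_union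
    (disjoint_singleton_left.2 (pair_notMem_pathEdges hg hab)), bdry_symmDiff, bdry_pair hne,
    bdry_pathEdges (by omega) hg, symmDiff_self, bot_eq_empty]

lemma isNCycle_closedPathEdges (hab : a + 2 ≤ b) (hg : Set.InjOn g (Set.Icc a b))
    (hY : closedPathEdges g a b ⊆ Y) : IsNCycle Y 1 (closedPathEdges g a b) :=
  ⟨⟨hY, fun _ => card_eq_two_of_mem_closedPathEdges hab hg⟩, bdry_closedPathEdges hab hg⟩

lemma IsNCycle.exists_ne_pair_mem (hα : IsNCycle Y 1 α) {u v : V} (huv : {u, v} ∈ α) :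
    ∃ w, w ≠ v ∧ {v, w} ∈ α ∧ ({v, w} : Finset V) ≠ {u, v} := by
  have hdeg : 1 < #(α.filter (v ∈ ·)) := by
    obtain ⟨m, hm⟩ := hα.even_card_filter_mem v
    have : 0 < #(α.filter (v ∈ ·)) := card_pos.2 ⟨{u, v}, mem_filter.2 ⟨huv, by simp⟩⟩
    omega
  obtain ⟨e, he, hne⟩ := exists_mem_ne hdeg {u, v}
  obtain ⟨heα, hve⟩ := mem_filter.1 he
  obtain ⟨w, hw⟩ : ∃ w, e.erase v = {w} :=
    card_eq_one.1 (by rw [card_erase_of_mem hve, hα.1.2 e heα])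
  have hev : e = {v, w} := by rw [← hw, insert_erase hve]
  refine ⟨w, fun h => ?_, hev ▸ heα, hev ▸ hne⟩
  have hw' : w ∈ e.erase v := hw ▸ mem_singleton_self w
  simp [h] at hw'

lemma IsNCycle.exists_closedPathEdges_or_extend (hα : IsNCycle Y 1 α) {m : ℕ}
    (hg : Set.InjOn g (Set.Icc 0 (m + 1))) (hpath : pathEdges g 0 (m + 1) ⊆ α) :
    (∃ i, i + 2 ≤ m + 1 ∧ closedPathEdges g i (m + 1) ⊆ α) ∨
      ∃ g' : ℕ → V, Set.InjOn g' (Set.Icc 0 (m + 2)) ∧ pathEdges g' 0 (m + 2) ⊆ α := by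
  obtain ⟨w, hw, hwα, hwne⟩ :=
    hα.exists_ne_pair_mem (hpath (pair_mem_pathEdges (Nat.zero_le m) (Nat.lt_succ_self m)))
  by_cases hwg : w ∈ g '' Set.Icc 0 (m + 1)
  · left
    obtain ⟨i, hi, rfl⟩ := hwg
    have him : i ≠ m := by rintro rfl; exact hwne (pair_comm _ _)
    have hi' : i ≠ m + 1 := by rintro rfl; exact hw rfl
    refine ⟨i, by simp only [Set.mem_Icc] at hi; omega, insert_subset ?_ ?_⟩
    · rwa [pair_comm]
    · exact (pathEdges_mono (Nat.zero_le i) le_rfl).trans hpath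
  · right
    have heq : Set.EqOn (Function.update g (m + 2) w) g (Set.Icc 0 (m + 1)) :=
      fun i hi => Function.update_of_ne (by simp only [Set.mem_Icc] at hi; omega) _ _
    refine ⟨Function.update g (m + 2) w, ?_, ?_⟩
    · rw [show m + 2 = m + 1 + 1 from rfl, ← Set.insert_Icc_right_eq_Icc_add_one (by omega),
        Set.injOn_insert (by simp)]
      exact ⟨hg.congr heq.symm, by rwa [heq.image_eq, Function.update_self]⟩
    · rw [pathEdges_succ (by omega), pathEdges_congr heq, Function.update_self,
        Function.update_of_ne (by omega)]
      exact insert_subset hwα hpath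

/-- Take a longest path in `α`: the second edge at its last vertex must close it up. -/
lemma IsNCycle.exists_closedPathEdges_subset (hα : IsNCycle Y 1 α) (hne : α.Nonempty) :
    ∃ g a b, a + 2 ≤ b ∧ Set.InjOn g (Set.Icc a b) ∧ closedPathEdges g a b ⊆ α := by
  classical
  let P k := ∃ g : ℕ → V, Set.InjOn g (Set.Icc 0 k) ∧ pathEdges g 0 k ⊆ α
  have hbound : ∀ k, P k → k ≤ Fintype.card V :=
    fun _ ⟨_, hg, _⟩ => (lt_card_of_injOn_Icc hg).le
  have hP1 : P 1 := by
    obtain ⟨s, hs⟩ := hne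
    obtain ⟨u, v, huv, rfl⟩ := card_eq_two.1 (hα.1.2 s hs)
    refine ⟨fun i => if i = 0 then u else v, fun i hi j hj h => ?_, ?_⟩
    · obtain ⟨-, hi⟩ := hi
      obtain ⟨-, hj⟩ := hj
      interval_cases i <;> interval_cases j <;> simp_all
    · simpa [pathEdges] using hs
  obtain ⟨m, hm⟩ : ∃ m, Nat.findGreatest P (Fintype.card V) = m + 1 :=
    ⟨_, (Nat.succ_pred_eq_of_pos (Nat.le_findGreatest (hbound 1 hP1) hP1)).symm⟩
  obtain ⟨g, hg, hpath⟩ : P (m + 1) := hm ▸ Nat.findGreatest_spec (hbound 1 hP1) hP1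
  rcases hα.exists_closedPathEdges_or_extend hg hpath with ⟨i, hi, hsub⟩ | hlonger
  · exact ⟨g, i, m + 1, hi, hg.mono (Set.Icc_subset_Icc_left (Nat.zero_le i)), hsub⟩
  · have := Nat.le_findGreatest (P := P) (hbound _ hlonger) hlonger
    omega

/-- A chord `{g i, g j}` would split the minimal cycle into the shorter cycle
`g i, …, g j` and its complement `α ∆ (g i, …, g j)`, which is shorter too. -/
lemma IsMinNonBdry.pair_mem_of_closedPathEdges {i j : ℕ}
    (hα : IsMinNonBdry Y 1 (closedPathEdges g a b)) (hab : a + 2 ≤ b)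
    (hg : Set.InjOn g (Set.Icc a b)) (hai : a ≤ i) (hij : i < j) (hjb : j ≤ b)
    (he : {g i, g j} ∈ Y) : {g i, g j} ∈ closedPathEdges g a b := by
  by_contra hne
  set α := closedPathEdges g a b
  have hpath : pathEdges g i j ⊆ α := (pathEdges_mono hai hjb).trans (subset_insert _ _)
  have hij2 : i + 2 ≤ j := by
    by_contra h
    obtain rfl : j = i + 1 := by omega
    exact hne (mem_insert_of_mem (pair_mem_pathEdges hai (by omega)))
  have hshort : j - i < b - a := by
    by_contra h
    obtain ⟨rfl, rfl⟩ : i = a ∧ j = b := by omega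
    exact hne (mem_insert_self _ _)
  have hg' : Set.InjOn g (Set.Icc i j) := hg.mono (Set.Icc_subset_Icc hai hjb)
  have hc : IsNCycle Y 1 (closedPathEdges g i j) :=
    isNCycle_closedPathEdges hij2 hg' (insert_subset he (hpath.trans hα.1.1.1))
  have hcardα : #α = b - a + 1 := card_closedPathEdges hab hg
  have hcardc : #(closedPathEdges g i j) = j - i + 1 := card_closedPathEdges hij2 hg'
  have hcardi : #(α ∩ closedPathEdges g i j) = j - i := by
    rw [closedPathEdges, inter_insert_of_notMem hne, inter_eq_right.2 hpath,
      card_pathEdges hij.le hg']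
  have := card_symmDiff_add_two_mul_card_inter α (closedPathEdges g i j)
  rcases hα.card_le_or_card_le_symmDiff hc with h | h <;> omega

end Cycles

theorem minimal_generator_is_induced_cycle_general (X : Finset (Finset V))
    (W : Finset V) (α : Finset (Finset V))
    (hcyc : IsNCycle (indOn X W) 1 α) (hnb : ¬ IsNBdry (indOn X W) 1 α)
    (hmin : ∀ α', IsNCycle (indOn X W) 1 α' → ¬ IsNBdry (indOn X W) 1 α' →
      α.card ≤ α'.card) :
    IsCycleEdges α ∧ ∀ e ∈ indOn X W, e.card = 2 → e ⊆ α.biUnion id → e ∈ α := by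
  have hα : IsMinNonBdry (indOn X W) 1 α := ⟨hcyc, hnb, hmin⟩
  have hne : α.Nonempty := nonempty_iff_ne_empty.2 fun h => hnb (h ▸ isNBdry_empty)
  obtain ⟨g, a, b, hab, hg, hsub⟩ := hcyc.exists_closedPathEdges_subset hne
  obtain rfl : closedPathEdges g a b = α :=
    hα.eq_of_subset (isNCycle_closedPathEdges hab hg (hsub.trans hcyc.1.1)) (insert_nonempty _ _)
      hsub
  refine ⟨isCycleEdges_closedPathEdges hab hg, fun e he he2 hev => ?_⟩
  obtain ⟨u, v, huv, rfl⟩ := card_eq_two.1 he2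
  have hvert : ∀ x ∈ ({u, v} : Finset V), ∃ i ∈ Set.Icc a b, g i = x := fun x hx => by
    obtain ⟨s, hs, hxs⟩ := mem_biUnion.1 (hev hx)
    exact exists_eq_of_mem_of_mem_closedPathEdges (by omega) hs hxs
  obtain ⟨i, hi, rfl⟩ := hvert u (by simp)
  obtain ⟨j, hj, rfl⟩ := hvert v (by simp)
  rcases lt_or_gt_of_ne (fun h : i = j => huv (congrArg g h)) with hij | hji
  · exact hα.pair_mem_of_closedPathEdges hab hg hi.1 hij hj.2 he
  · rw [pair_comm] at he ⊢
    exact hα.pair_mem_of_closedPathEdges hab hg hj.1 hji hi.2 he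

/-- a nonbounding `1`-cycle of `X[W]` with the minimum number of edges
among all nonbounding `1`-cycles is an induced (chordless) cycle of the `1`-skeleton. -/
theorem minimal_generator_is_induced_cycle (X : Finset (Finset V)) (hX : IsComplex X)
    (W : Finset V) (α : Finset (Finset V))
    (hcyc : IsNCycle (indOn X W) 1 α) (hnb : ¬ IsNBdry (indOn X W) 1 α)
    (hmin : ∀ α', IsNCycle (indOn X W) 1 α' → ¬ IsNBdry (indOn X W) 1 α' →
      α.card ≤ α'.card) :
    IsCycleEdges α ∧ ∀ e ∈ indOn X W, e.card = 2 → e ⊆ α.biUnion id → e ∈ α :=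
  minimal_generator_is_induced_cycle_general X W α hcyc hnb hmin
end
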